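/- Let (q*,w*) be a saddle point of L_ρ, let q ∈ dom R_Q, and let c > 0 satisfy c ≥ 2‖w*‖. If h(q) − h(q*) + c‖𝒦q‖ + (ρ/2)‖𝒦q‖² ≤ δ holds for some δ ≥ 0, then (1) h(q) − h(q*) ≤ δ, and (2) ‖𝒦q‖ ≤ 2δ/c. -/
import Mathlib


open scoped RealInnerProductSpace
noncomputable section

variable {E₁ E₂ : Type*}
  [NormedAddCommGroup E₁] [InnerProductSpace ℝ E₁] [FiniteDimensional ℝ E₁]
  [NormedAddCommGroup E₂] [InnerProductSpace ℝ E₂] [FiniteDimensional ℝ E₂]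

/-- first component of a point of `E := E₁ ×₂ E₂` -/
def xPart (q : WithLp 2 (E₁ × E₂)) : E₁ := (WithLp.equiv 2 (E₁ × E₂) q).1
/-- second component of a point of `E := E₁ ×₂ E₂` -/
def yPart (q : WithLp 2 (E₁ × E₂)) : E₂ := (WithLp.equiv 2 (E₁ × E₂) q).2

/-- The constraint map `𝒦(x,y) := 𝒜x − y`, as a continuous linear map. -/
def Kmap (A : E₁ →L[ℝ] E₂) : WithLp 2 (E₁ × E₂) →L[ℝ] E₂ :=
  (A.comp (ContinuousLinearMap.fst ℝ E₁ E₂) - ContinuousLinearMap.snd ℝ E₁ E₂).comp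
    (WithLp.prodContinuousLinearEquiv 2 ℝ E₁ E₂).toContinuousLinearMap

/-- objective of Problem (OP): `h(q) := f(x) + R_Q(q)` -/
def hOP (f : E₁ → ℝ) (RQ : WithLp 2 (E₁ × E₂) → EReal) (q : WithLp 2 (E₁ × E₂)) : EReal :=
  (f (xPart q) : EReal) + RQ q

/-- the augmented Lagrangian `L_ρ(q,w) := h(q) + ⟨w,𝒦q⟩ + (ρ/2)‖𝒦q‖²` -/
def AL (f : E₁ → ℝ) (RQ : WithLp 2 (E₁ × E₂) → EReal) (A : E₁ →L[ℝ] E₂) (ρ : ℝ)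
    (q : WithLp 2 (E₁ × E₂)) (w : E₂) : EReal :=
  hOP f RQ q + ((⟪w, Kmap A q⟫ + ρ / 2 * ‖Kmap A q‖ ^ 2 : ℝ) : EReal)

/-- saddle point of the augmented Lagrangian -/
def IsSaddle (f : E₁ → ℝ) (RQ : WithLp 2 (E₁ × E₂) → EReal) (A : E₁ →L[ℝ] E₂) (ρ : ℝ)
    (qs : WithLp 2 (E₁ × E₂)) (ws : E₂) : Prop :=
  ∀ q : WithLp 2 (E₁ × E₂), ∀ w : E₂,
    AL f RQ A ρ qs w ≤ AL f RQ A ρ qs ws ∧ AL f RQ A ρ qs ws ≤ AL f RQ A ρ q ws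

/-- a proper function with values in `(-∞, +∞]` -/
def ProperFun {V : Type*} (R : V → EReal) : Prop :=
  (∃ x, R x ≠ ⊤) ∧ ∀ x, R x ≠ ⊥

/-- convexity for `EReal`-valued functions -/
def ERConvexOn {V : Type*} [AddCommGroup V] [Module ℝ V] (R : V → EReal) : Prop :=
  ∀ x y : V, ∀ a b : ℝ, 0 ≤ a → 0 ≤ b → a + b = 1 →
    R (a • x + b • y) ≤ (a : EReal) * R x + (b : EReal) * R y

/-- objective and feasibility approximation: if `(q*,w*)` is a saddle
point of `L_ρ`, `q ∈ dom R_Q`, `c > 0` with `c ≥ 2‖w*‖`, `δ ≥ 0`, and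
`h(q) − h(q*) + c‖𝒦q‖ + (ρ/2)‖𝒦q‖² ≤ δ`, then `h(q) − h(q*) ≤ δ` and `‖𝒦q‖ ≤ 2δ/c`. -/
theorem objective_feasibility_approx (f : E₁ → ℝ) (ρ : ℝ) (hρ : 0 < ρ) (A : E₁ →L[ℝ] E₂)
    (RX : E₁ → EReal) (RY : E₂ → EReal)
    (RQ : WithLp 2 (E₁ × E₂) → EReal) (hRQ : ∀ q, RQ q = RX (xPart q) + RY (yPart q))
    (hRXproper : ProperFun RX) (hRXlsc : LowerSemicontinuous RX) (hRXconv : ERConvexOn RX)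
    (hRYproper : ProperFun RY) (hRYlsc : LowerSemicontinuous RY) (hRYconv : ERConvexOn RY)
    (hconv : ConvexOn ℝ Set.univ f)
    (qs : WithLp 2 (E₁ × E₂)) (ws : E₂) (hsaddle : IsSaddle f RQ A ρ qs ws)
    (q : WithLp 2 (E₁ × E₂)) (hq : RQ q ≠ ⊤)
    (c : ℝ) (hc : 0 < c) (hcw : 2 * ‖ws‖ ≤ c) (δ : ℝ) (hδ : 0 ≤ δ)
    (happrox : hOP f RQ q + ((c * ‖Kmap A q‖ + ρ / 2 * ‖Kmap A q‖ ^ 2 : ℝ) : EReal) ≤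
      hOP f RQ qs + (δ : EReal)) :
    hOP f RQ q ≤ hOP f RQ qs + (δ : EReal) ∧ ‖Kmap A q‖ ≤ 2 * δ / c := by
  classical
  -- RQ never ⊥
  have hRQbot : ∀ v, RQ v ≠ ⊥ := by
    intro v
    rw [hRQ]
    intro h
    rcases EReal.add_eq_bot_iff.mp h with h1 | h1
    · exact hRXproper.2 _ h1
    · exact hRYproper.2 _ h1
  -- a witness with finite RQ
  obtain ⟨x₀, hx₀⟩ := hRXproper.1
  obtain ⟨y₀, hy₀⟩ := hRYproper.1
  set q₀ : WithLp 2 (E₁ × E₂) := (WithLp.equiv 2 (E₁ × E₂)).symm (x₀, y₀) with hq₀def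
  have hxq₀ : xPart q₀ = x₀ := rfl
  have hyq₀ : yPart q₀ = y₀ := rfl
  have hq₀ : RQ q₀ ≠ ⊤ := by
    rw [hRQ, hxq₀, hyq₀]
    exact (EReal.add_lt_top hx₀ hy₀).ne
  -- RQ qs finite
  have hqs_top : RQ qs ≠ ⊤ := by
    intro htop
    have h2 := (hsaddle q₀ ws).2
    have hR : AL f RQ A ρ q₀ ws ≠ ⊤ := by
      unfold AL hOP
      exact (EReal.add_lt_top ((EReal.add_lt_top (EReal.coe_ne_top _) hq₀).ne) (EReal.coe_ne_top _)).ne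
    have hL : AL f RQ A ρ qs ws = ⊤ := by
      unfold AL hOP
      rw [htop, EReal.add_top_of_ne_bot (EReal.coe_ne_bot _),
        EReal.top_add_of_ne_bot (EReal.coe_ne_bot _)]
    exact hR (top_le_iff.mp (hL ▸ h2))
  -- realize real values
  obtain ⟨r, hr⟩ : ∃ r : ℝ, RQ q = (r : EReal) := by
    lift RQ q to ℝ using ⟨hq, hRQbot q⟩ with r
    exact ⟨r, rfl⟩
  obtain ⟨s, hs⟩ : ∃ s : ℝ, RQ qs = (s : EReal) := by
    lift RQ qs to ℝ using ⟨hqs_top, hRQbot qs⟩ with s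
    exact ⟨s, rfl⟩
  have hhq : hOP f RQ q = ((f (xPart q) + r : ℝ) : EReal) := by
    unfold hOP; rw [hr]; exact (EReal.coe_add _ _).symm
  have hhqs : hOP f RQ qs = ((f (xPart qs) + s : ℝ) : EReal) := by
    unfold hOP; rw [hs]; exact (EReal.coe_add _ _).symm
  -- feasibility of qs : Kmap A qs = 0
  have hKqs : Kmap A qs = 0 := by
    have h1 := (hsaddle qs (ws + Kmap A qs)).1
    unfold AL at h1
    rw [hhqs, ← EReal.coe_add, ← EReal.coe_add, EReal.coe_le_coe_iff] at h1
    have hinner : ⟪ws + Kmap A qs, Kmap A qs⟫ = ⟪ws, Kmap A qs⟫ + ‖Kmap A qs‖ ^ 2 := by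
      rw [inner_add_left, real_inner_self_eq_norm_sq]
    have : ‖Kmap A qs‖ ^ 2 ≤ 0 := by nlinarith [h1, hinner]
    have : ‖Kmap A qs‖ = 0 := by nlinarith [norm_nonneg (Kmap A qs)]
    exact norm_eq_zero.mp this
  -- key real inequalities
  set n := ‖Kmap A q‖ with hn
  have hn0 : 0 ≤ n := norm_nonneg _
  have hsad : f (xPart qs) + s ≤ f (xPart q) + r + ⟪ws, Kmap A q⟫ + ρ / 2 * n ^ 2 := by
    have h2 := (hsaddle q ws).2
    unfold AL at h2
    rw [hhqs, hhq, hKqs] at h2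
    simp only [inner_zero_right, norm_zero] at h2
    rw [← EReal.coe_add, ← EReal.coe_add, EReal.coe_le_coe_iff] at h2
    linarith [h2]
  have happ : f (xPart q) + r + (c * n + ρ / 2 * n ^ 2) ≤ f (xPart qs) + s + δ := by
    rw [hhq, hhqs, ← EReal.coe_add, ← EReal.coe_add, EReal.coe_le_coe_iff] at happrox
    linarith [happrox]
  have hinle : ⟪ws, Kmap A q⟫ ≤ ‖ws‖ * n := real_inner_le_norm _ _
  constructor
  · rw [hhq, hhqs, ← EReal.coe_add, EReal.coe_le_coe_iff]
    nlinarith [mul_nonneg hc.le hn0, sq_nonneg n, mul_nonneg (le_of_lt hρ) (sq_nonneg n)]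
  · rw [le_div_iff₀ hc]
    nlinarith [mul_nonneg (norm_nonneg ws) hn0, mul_nonneg (le_of_lt hρ) (sq_nonneg n)]


end
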